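/- Let H_o be the de Branges–Rovnyak space of a Schur function φ ∈ S(ℂ⁺;U,Y) with kernel K_o(μ,λ) = (1 − φ(μ)φ(λ)*)/(μ + conj λ), and let A_o be the operator with domain dom(A_o) = {x ∈ H_o : ∃ y ∈ Y with μ ↦ μ x(μ) − y ∈ H_o} and (A_o x)(μ) = μ x(μ) − lim_{Re η→∞} η x(η). Then for every α ∈ ℂ⁺ and x ∈ H_o, the function μ ↦ (x(μ) − x(α))/(α − μ) lies in dom(A_o) and (α − A_o) applied to it returns x; i.e., ((α − A_o)⁻¹ x)(μ) = (x(μ) − x(α))/(α − μ). Moreover C_o(α − A_o)⁻¹ x = x(α), where C_o x = lim_{Re η→∞} η x(η). -/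

import Mathlib

/-!
Write `k_m p := ko m p`. With the vectors `g_{m,p} = conj (α - m) • k_m p`, `e_{m,p} = k_m p - k_α p`
and `b_{m,p} = φ(m)* p - φ(α)* p`, the kernel formula gives
`⟪e_i, g_j⟫ + ⟪g_i, e_j⟫ = 2 Re α ⟪e_i, e_j⟫ + ⟪b_i, b_j⟫`, so `‖∑ cᵢ eᵢ‖ ≤ ‖∑ cᵢ gᵢ‖ / Re α`.
Hence `∑ cᵢ gᵢ ↦ ⟪x, ∑ cᵢ eᵢ⟫` is a bounded functional on the span of the kernel functions, and
its Riesz representative `z` satisfies `⟪z, k_μ q⟫ = ⟪x, k_μ q - k_α q⟫ / conj (α - μ)`, i.e.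
`z(μ) = (x(μ) - x(α)) / (α - μ)`. Then `μ z(μ) - x(α) = α z(μ) - x(μ)` is `α z - x ∈ Ho`, and
`η z(η) = η / (α - η) • (x(η) - x(α)) → x(α)` because the `H²` estimate forces `x(η) → 0`.
-/

open Filter
open Finsupp (linearCombination)

local notation "⟪" x ", " y "⟫" => @inner ℂ _ _ x y

section Hilbert

variable {𝕜 E F : Type*} [RCLike 𝕜]
  [NormedAddCommGroup E] [InnerProductSpace 𝕜 E] [NormedAddCommGroup F] [InnerProductSpace 𝕜 F]

theorem exists_inner_eq_of_norm_le {V : Type*} [AddCommGroup V] [Module 𝕜 V] [CompleteSpace E]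
    (θ : V →ₗ[𝕜] E) (Λ : V →ₗ[𝕜] 𝕜) (C : ℝ) (hΛ : ∀ v, ‖Λ v‖ ≤ C * ‖θ v‖) :
    ∃ z : E, ∀ v, inner 𝕜 z (θ v) = Λ v := by
  have hker : LinearMap.ker θ ≤ LinearMap.ker Λ := fun v hv ↦ by
    simpa [LinearMap.mem_ker.mp hv] using hΛ v
  let F₀ : LinearMap.range θ →ₗ[𝕜] 𝕜 :=
    (LinearMap.ker θ).liftQ Λ hker ∘ₗ θ.quotKerEquivRange.symm.toLinearMap
  have hF₀ : ∀ v, F₀ ⟨θ v, LinearMap.mem_range_self θ v⟩ = Λ v := fun v ↦ by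
    simp only [F₀, LinearMap.comp_apply, LinearEquiv.coe_toLinearMap,
      LinearMap.quotKerEquivRange_symm_apply_image]
    exact Submodule.liftQ_apply _ _ _
  let F : StrongDual 𝕜 (LinearMap.range θ) := F₀.mkContinuous C <| by
    rintro ⟨_, v, rfl⟩
    rw [hF₀]
    exact hΛ v
  obtain ⟨G, hG, -⟩ := exists_extension_norm_eq (LinearMap.range θ) F
  refine ⟨(InnerProductSpace.toDual 𝕜 E).symm G, fun v ↦ ?_⟩
  rw [InnerProductSpace.toDual_symm_apply, ← hF₀]
  exact hG ⟨θ v, LinearMap.mem_range_self θ v⟩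

theorem inner_linearCombination_linearCombination {ι : Type*} (f g : ι → E) (c d : ι →₀ 𝕜) :
    inner 𝕜 (linearCombination 𝕜 f c) (linearCombination 𝕜 g d) =
      c.sum fun i a ↦ d.sum fun j b ↦ starRingEnd 𝕜 a * b * inner 𝕜 (f i) (g j) := by
  rw [Finsupp.linearCombination_apply, Finsupp.sum_inner]
  simp only [Finsupp.linearCombination_apply, Finsupp.inner_sum, inner_smul_left,
    inner_smul_right]
  exact Finsupp.sum_congr fun i _ ↦ Finsupp.sum_congr fun j _ ↦ by ring

theorem norm_le_div_of_inner_add_inner_eq {e g : E} {b : F} {a : ℝ} (ha : 0 < a)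
    (h : inner 𝕜 e g + inner 𝕜 g e = ((2 * a : ℝ) : 𝕜) * inner 𝕜 e e + inner 𝕜 b b) :
    ‖e‖ ≤ ‖g‖ / a := by
  have hre := congrArg RCLike.re h
  rw [map_add, map_add, inner_re_symm (𝕜 := 𝕜) g e, RCLike.re_ofReal_mul, inner_self_eq_norm_sq,
    inner_self_eq_norm_sq] at hre
  have hle : a * ‖e‖ ^ 2 ≤ ‖e‖ * ‖g‖ := by
    nlinarith [re_inner_le_norm (𝕜 := 𝕜) e g, sq_nonneg ‖b‖]
  rw [le_div_iff₀ ha]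
  rcases (norm_nonneg e).eq_or_lt with he | he
  · rw [← he]; simp
  · nlinarith

theorem inner_linearCombination_add_eq_of_forall {ι : Type*} {e g : ι → E} {b : ι → F} {a : 𝕜}
    (h : ∀ i j, inner 𝕜 (e i) (g j) + inner 𝕜 (g i) (e j) =
      a * inner 𝕜 (e i) (e j) + inner 𝕜 (b i) (b j)) (c d : ι →₀ 𝕜) :
    inner 𝕜 (linearCombination 𝕜 e c) (linearCombination 𝕜 g d) +
        inner 𝕜 (linearCombination 𝕜 g c) (linearCombination 𝕜 e d) =
      a * inner 𝕜 (linearCombination 𝕜 e c) (linearCombination 𝕜 e d) +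
        inner 𝕜 (linearCombination 𝕜 b c) (linearCombination 𝕜 b d) := by
  simp only [inner_linearCombination_linearCombination, Finsupp.sum, ← Finset.sum_add_distrib,
    Finset.mul_sum]
  exact Finset.sum_congr rfl fun i _ ↦ Finset.sum_congr rfl fun j _ ↦ by
    linear_combination (starRingEnd 𝕜 (c i) * d j) * h i j

end Hilbert

section Kernel

variable {Y H U : Type*}
  [NormedAddCommGroup Y] [InnerProductSpace ℂ Y] [NormedAddCommGroup H] [InnerProductSpace ℂ H]
  [NormedAddCommGroup U] [InnerProductSpace ℂ U]
  {ko : ℂ → Y → H} {ψ : ℂ → Y → U} {α : ℂ}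

theorem add_conj_mul_inner_kernel_eq
    [CompleteSpace U] [CompleteSpace Y] {φ : ℂ → (U →L[ℂ] Y)} {vo : H →ₗ[ℂ] (ℂ → Y)}
    (hrep : ∀ (f : H) (l : ℂ), 0 < l.re → ∀ y : Y, ⟪ko l y, f⟫ = ⟪y, vo f l⟫)
    (hker : ∀ m l : ℂ, 0 < m.re → 0 < l.re → ∀ y : Y,
      vo (ko l y) m = (m + starRingEnd ℂ l)⁻¹ • (y - φ m (ContinuousLinearMap.adjoint (φ l) y)))
    {m l : ℂ} (hm : 0 < m.re) (hl : 0 < l.re) (p q : Y) :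
    (m + starRingEnd ℂ l) * ⟪ko m p, ko l q⟫ =
      ⟪p, q⟫ - ⟪ContinuousLinearMap.adjoint (φ m) p, ContinuousLinearMap.adjoint (φ l) q⟫ := by
  have hne : m + starRingEnd ℂ l ≠ 0 := ne_of_apply_ne Complex.re <| by simp; linarith
  rw [hrep _ m hm, hker m l hm hl, inner_smul_right, inner_sub_right, ← mul_assoc,
    mul_inv_cancel₀ hne, one_mul, ContinuousLinearMap.adjoint_inner_left]

theorem inner_sub_kernel_add_inner_eq
    (hgram : ∀ m l : ℂ, 0 < m.re → 0 < l.re → ∀ p q : Y,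
      (m + starRingEnd ℂ l) * ⟪ko m p, ko l q⟫ = ⟪p, q⟫ - ⟪ψ m p, ψ l q⟫)
    {m l : ℂ} (hm : 0 < m.re) (hl : 0 < l.re) (hα : 0 < α.re) (p q : Y) :
    ⟪ko m p - ko α p, starRingEnd ℂ (α - l) • ko l q⟫ +
        ⟪starRingEnd ℂ (α - m) • ko m p, ko l q - ko α q⟫ =
      ((2 * α.re : ℝ) : ℂ) * ⟪ko m p - ko α p, ko l q - ko α q⟫ +
        ⟪ψ m p - ψ α p, ψ l q - ψ α q⟫ := by
  rw [← Complex.add_conj]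
  simp only [inner_sub_left, inner_sub_right, inner_smul_left, inner_smul_right,
    map_sub, Complex.conj_conj]
  linear_combination hgram α l hα hl p q + hgram m α hm hα p q - hgram m l hm hl p q
    - hgram α α hα hα p q

theorem exists_eval_eq_differenceQuotient [CompleteSpace H] {vo : H →ₗ[ℂ] (ℂ → Y)}
    (hrep : ∀ (f : H) (l : ℂ), 0 < l.re → ∀ y : Y, ⟪ko l y, f⟫ = ⟪y, vo f l⟫)
    (hgram : ∀ m l : ℂ, 0 < m.re → 0 < l.re → ∀ p q : Y,
      (m + starRingEnd ℂ l) * ⟪ko m p, ko l q⟫ = ⟪p, q⟫ - ⟪ψ m p, ψ l q⟫)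
    (hα : 0 < α.re) (x : H) :
    ∃ z : H, ∀ μ : ℂ, 0 < μ.re → μ ≠ α → vo z μ = (α - μ)⁻¹ • (vo x μ - vo x α) := by
  let θ := linearCombination ℂ fun i : {m : ℂ // 0 < m.re} × Y ↦
    starRingEnd ℂ (α - i.1) • ko i.1 i.2
  let σ := linearCombination ℂ fun i : {m : ℂ // 0 < m.re} × Y ↦ ko i.1 i.2 - ko α i.2
  have hσθ : ∀ c, ‖σ c‖ ≤ ‖θ c‖ / α.re := fun c ↦
    norm_le_div_of_inner_add_inner_eq hα <| inner_linearCombination_add_eq_of_forall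
      (fun i j ↦ inner_sub_kernel_add_inner_eq hgram i.1.2 j.1.2 hα i.2 j.2) c c
  obtain ⟨z, hz⟩ := exists_inner_eq_of_norm_le θ (innerₛₗ ℂ x ∘ₗ σ) (‖x‖ / α.re) fun c ↦
    calc ‖⟪x, σ c⟫‖ ≤ ‖x‖ * ‖σ c‖ := norm_inner_le_norm _ _
      _ ≤ ‖x‖ * (‖θ c‖ / α.re) := by gcongr; exact hσθ c
      _ = ‖x‖ / α.re * ‖θ c‖ := by ring
  refine ⟨z, fun μ hμ hne ↦ ext_inner_left ℂ fun q ↦ ?_⟩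
  have hconj : starRingEnd ℂ (α - μ) ≠ 0 := (map_ne_zero _).mpr (sub_ne_zero.mpr hne.symm)
  have hzμ := hz (Finsupp.single (⟨μ, hμ⟩, q) (starRingEnd ℂ (α - μ))⁻¹)
  simp only [θ, σ, Finsupp.linearCombination_single, smul_smul, inv_mul_cancel₀ hconj, one_smul,
    LinearMap.comp_apply, innerₛₗ_apply_apply, inner_smul_right, inner_sub_right] at hzμ
  rw [inner_smul_right, inner_sub_right, ← hrep z μ hμ, ← hrep x μ hμ, ← hrep x α hα,
    ← inner_conj_symm, hzμ]
  simp [inner_conj_symm]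

end Kernel

theorem comap_re_atTop_le_cobounded : comap Complex.re atTop ≤ Bornology.cobounded ℂ := by
  rw [← comap_norm_atTop]
  exact (tendsto_atTop_mono Complex.re_le_norm tendsto_comap).le_comap

theorem tendsto_mul_inv_const_sub_comap_re_atTop (α : ℂ) :
    Tendsto (fun η ↦ η * (α - η)⁻¹) (comap Complex.re atTop) (nhds (-1)) := by
  have hlim : Tendsto (fun η ↦ (α * η⁻¹ - 1)⁻¹) (comap Complex.re atTop) (nhds (-1)) := by
    simpa using (((tendsto_inv₀_cobounded.mono_left comap_re_atTop_le_cobounded).const_mul α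
      ).sub_const 1).inv₀ (by simp)
  refine hlim.congr' ?_
  filter_upwards [tendsto_comap.eventually (eventually_gt_atTop 0)] with η hη
  have hη0 : η ≠ 0 := fun h ↦ by simp [h] at hη
  rw [← mul_inv_cancel₀ hη0, ← sub_mul, mul_inv, inv_inv, mul_comm]

theorem tendsto_zero_of_norm_le_div_sqrt {E : Type*} [NormedAddCommGroup E] {f : ℂ → E} {C : ℝ}
    (hf : ∀ μ : ℂ, 0 < μ.re → ‖f μ‖ ≤ C / √(2 * μ.re)) :
    Tendsto f (comap Complex.re atTop) (nhds 0) := by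
  have hbound : Tendsto (fun t : ℝ ↦ C / √(2 * t)) atTop (nhds 0) :=
    tendsto_const_nhds.div_atTop (Real.tendsto_sqrt_atTop.comp (tendsto_id.const_mul_atTop two_pos))
  refine squeeze_zero_norm' ?_ (hbound.comp tendsto_comap)
  filter_upwards [tendsto_comap.eventually (eventually_gt_atTop 0)] with μ hμ
  exact hf μ hμ

theorem dbr_observable_resolvent_formula_general
    {U Y Ho : Type*}
    [NormedAddCommGroup U] [InnerProductSpace ℂ U] [CompleteSpace U]
    [NormedAddCommGroup Y] [InnerProductSpace ℂ Y] [CompleteSpace Y]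
    [NormedAddCommGroup Ho] [InnerProductSpace ℂ Ho] [CompleteSpace Ho]
    (φ : ℂ → (U →L[ℂ] Y))
    (vo : Ho →ₗ[ℂ] (ℂ → Y)) (ko : ℂ → Y → Ho)
    (hrep : ∀ (f : Ho) (l : ℂ), 0 < l.re → ∀ y : Y,
      (inner ℂ (ko l y) f : ℂ) = inner ℂ y (vo f l))
    (hker : ∀ m l : ℂ, 0 < m.re → 0 < l.re → ∀ y : Y,
      vo (ko l y) m = ((m + (starRingEnd ℂ) l)⁻¹ : ℂ)
        • (y - φ m (ContinuousLinearMap.adjoint (φ l) y)))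
    (hdecay : ∀ (x : Ho) (μ : ℂ), 0 < μ.re →
      ‖vo x μ‖ ≤ ‖x‖ / Real.sqrt (2 * μ.re))
    (α : ℂ) (hα : 0 < α.re) (x : Ho) :
    ∃ z w : Ho, ∃ y : Y,
      (∀ μ : ℂ, 0 < μ.re → μ ≠ α →
        vo z μ = (α - μ)⁻¹ • (vo x μ - vo x α)) ∧
      (∀ μ : ℂ, 0 < μ.re → vo w μ = μ • vo z μ - y) ∧
      Tendsto (fun η : ℂ => η • vo z η) (comap Complex.re atTop) (nhds y) ∧
      α • z - w = x ∧
      y = vo x α := by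
  obtain ⟨z, hz⟩ := exists_eval_eq_differenceQuotient hrep
    (fun m l hm hl ↦ add_conj_mul_inner_kernel_eq hrep hker hm hl) hα x
  refine ⟨z, α • z - x, vo x α, hz, fun μ hμ ↦ ?_, ?_, sub_sub_cancel _ _, rfl⟩
  · rw [map_sub, map_smul, Pi.sub_apply, Pi.smul_apply]
    rcases eq_or_ne μ α with rfl | hne
    · rfl
    rw [sub_eq_sub_iff_sub_eq_sub, ← sub_smul, hz μ hμ hne, smul_smul,
      mul_inv_cancel₀ (sub_ne_zero.mpr hne.symm), one_smul]
  · have hzη : (fun η ↦ (η * (α - η)⁻¹) • (vo x η - vo x α)) =ᶠ[comap Complex.re atTop]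
        fun η ↦ η • vo z η := by
      filter_upwards [tendsto_comap.eventually (eventually_gt_atTop α.re)] with η hη
      rw [hz η (hα.trans hη) (by rintro rfl; exact lt_irrefl _ hη), smul_smul]
    simpa using ((tendsto_mul_inv_const_sub_comap_re_atTop α).smul
      ((tendsto_zero_of_norm_le_div_sqrt (hdecay x)).sub_const (vo x α))).congr' hzη

/-- **Resolvent formula for the main operator `A_o` of the observable model.**
`Ho` is the abstract model of the de Branges–Rovnyak space with kernel
`K_o(μ,λ) = (1 - φ(μ)φ(λ)*)/(μ + conj λ)`; elements are holomorphic on `ℂ⁺`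
and satisfy the `H²`-decay estimate.  `A_o` has domain
`{x ∈ Ho : ∃ y ∈ Y, μ ↦ μ x(μ) - y ∈ Ho}` and
`(A_o x)(μ) = μ x(μ) - lim_{Re η→∞} η x(η)`, and `C_o x = lim_{Re η→∞} η x(η)`.
For `α ∈ ℂ⁺`, `x ∈ Ho`, the function `z : μ ↦ (x(μ) - x(α))/(α - μ)` lies in
`dom(A_o)` (with `w = A_o z` and `y = lim_{Re η→∞} η z(η)`), `(α - A_o) z = x`,
and `C_o (α - A_o)⁻¹ x = y = x(α)`. -/
theorem dbr_observable_resolvent_formula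
    {U Y Ho : Type*}
    [NormedAddCommGroup U] [InnerProductSpace ℂ U] [CompleteSpace U]
    [NormedAddCommGroup Y] [InnerProductSpace ℂ Y] [CompleteSpace Y]
    [NormedAddCommGroup Ho] [InnerProductSpace ℂ Ho] [CompleteSpace Ho]
    (φ : ℂ → (U →L[ℂ] Y))
    (hφcontr : ∀ μ : ℂ, 0 < μ.re → ‖φ μ‖ ≤ 1)
    (hφhol : DifferentiableOn ℂ φ {μ : ℂ | 0 < μ.re})
    (vo : Ho →ₗ[ℂ] (ℂ → Y)) (ko : ℂ → Y → Ho)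
    (hrep : ∀ (f : Ho) (l : ℂ), 0 < l.re → ∀ y : Y,
      (inner ℂ (ko l y) f : ℂ) = inner ℂ y (vo f l))
    (hker : ∀ m l : ℂ, 0 < m.re → 0 < l.re → ∀ y : Y,
      vo (ko l y) m = ((m + (starRingEnd ℂ) l)⁻¹ : ℂ)
        • (y - φ m (ContinuousLinearMap.adjoint (φ l) y)))
    (hhol : ∀ x : Ho, DifferentiableOn ℂ (vo x) {μ : ℂ | 0 < μ.re})
    (hdecay : ∀ (x : Ho) (μ : ℂ), 0 < μ.re →
      ‖vo x μ‖ ≤ ‖x‖ / Real.sqrt (2 * μ.re))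
    (α : ℂ) (hα : 0 < α.re) (x : Ho) :
    ∃ z w : Ho, ∃ y : Y,
      (∀ μ : ℂ, 0 < μ.re → μ ≠ α →
        vo z μ = (α - μ)⁻¹ • (vo x μ - vo x α)) ∧
      (∀ μ : ℂ, 0 < μ.re → vo w μ = μ • vo z μ - y) ∧
      Tendsto (fun η : ℂ => η • vo z η) (comap Complex.re atTop) (nhds y) ∧
      α • z - w = x ∧
      y = vo x α :=
  dbr_observable_resolvent_formula_general φ vo ko hrep hker hdecay α hα x
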